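/- Let < and ≺ be total orders on 𝒜ₙ that are both barred-tight, let T (a colored tableau with respect to <) and T′ (a colored tableau with respect to ≺) be related by a single conversion switch, and let α be their common unbarred content. Then the word v(T) is an α-ballot sequence if and only if v(T′) is an α-ballot sequence. -/

import Mathlib

open scoped Classical

/-- A letter of the alphabet 𝒜ₙ: `(false, i)` is the unbarred letter `i+1`,
`(true, i)` is the barred letter `i+1` with a bar. -/
abbrev Letter (n : ℕ) := Bool × Fin n

/-- A filling assigns an optional letter to each box of the plane; boxes outside
the underlying shape carry `none`. -/
abbrev Filling (n : ℕ) := ℕ × ℕ → Option (Letter n)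

/-- `r` is a total (linear) order on `Letter n` extending the partial order of 𝒜ₙ,
in which the unbarred letters form a chain, the barred letters form a chain, and
barred and unbarred letters are incomparable. -/
def IsLinExt {n : ℕ} (r : Letter n → Letter n → Prop) : Prop :=
  IsLinearOrder (Letter n) r ∧ ∀ (b : Bool) (i j : Fin n), i ≤ j → r (b, i) (b, j)

/-- `T` is a semistandard colored tableau of shape `sh` with respect to the total order `r`:
rows and columns weakly increase with respect to `r`, no two identical unbarred letters
share a column, and no two identical barred letters share a row. -/
def IsColoredTableau {n : ℕ} (r : Letter n → Letter n → Prop) (sh : YoungDiagram)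
    (T : Filling n) : Prop :=
  (∀ c, (T c).isSome ↔ c ∈ sh) ∧
  (∀ i j₁ j₂ : ℕ, ∀ x y : Letter n, j₁ ≤ j₂ → T (i, j₁) = some x → T (i, j₂) = some y → r x y) ∧
  (∀ i₁ i₂ j : ℕ, ∀ x y : Letter n, i₁ ≤ i₂ → T (i₁, j) = some x → T (i₂, j) = some y → r x y) ∧
  (∀ i₁ i₂ j : ℕ, ∀ a : Fin n, i₁ ≠ i₂ → T (i₁, j) = some (false, a) →
    T (i₂, j) ≠ some (false, a)) ∧
  (∀ i j₁ j₂ : ℕ, ∀ b : Fin n, j₁ ≠ j₂ → T (i, j₁) = some (true, b) →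
    T (i, j₂) ≠ some (true, b))

/-- The unbarred reverse (row) reading word: unbarred entries, rows right to left,
rows top to bottom, skipping barred entries. -/
def uWord {n : ℕ} (sh : YoungDiagram) (T : Filling n) : List (Fin n) :=
  (List.range (sh.colLen 0)).flatMap fun i =>
    (List.range (sh.rowLen i)).reverse.filterMap fun j =>
      match T (i, j) with
      | some (false, a) => some a
      | _ => none

/-- The barred (column) reading word with bars removed: barred entries, columns bottom to top,
columns left to right, skipping unbarred entries. -/
def vWord {n : ℕ} (sh : YoungDiagram) (T : Filling n) : List (Fin n) :=
  (List.range (sh.rowLen 0)).flatMap fun j =>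
    (List.range (sh.colLen j)).reverse.filterMap fun i =>
      match T (i, j) with
      | some (true, b) => some b
      | _ => none

/-- The total reverse (row-column) reading word `w(T) = u(T)v(T)`. -/
def wWord {n : ℕ} (sh : YoungDiagram) (T : Filling n) : List (Fin n) :=
  uWord sh T ++ vWord sh T

/-- A word over `{1, …, n}` (encoded with `Fin n`, where `⟨i, _⟩` stands for the letter `i+1`)
is a ballot sequence if every prefix contains at least as many `i`'s as `i+1`'s. -/
def IsBallot {n : ℕ} (w : List (Fin n)) : Prop :=
  ∀ p : List (Fin n), p <+: w → ∀ i : ℕ, ∀ h : i + 1 < n,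
    p.count ⟨i + 1, h⟩ ≤ p.count ⟨i, Nat.lt_of_succ_lt h⟩

/-- A word over `{1, …, n}` is an `α`-ballot sequence if in every prefix the number of
`i+1`'s minus the number of `i`'s is at most `αᵢ − α_{i+1}`. -/
def IsAlphaBallot {n : ℕ} (α : Fin n → ℕ) (w : List (Fin n)) : Prop :=
  ∀ p : List (Fin n), p <+: w → ∀ i : ℕ, ∀ h : i + 1 < n,
    p.count ⟨i + 1, h⟩ + α ⟨i + 1, h⟩ ≤ p.count ⟨i, Nat.lt_of_succ_lt h⟩ + α ⟨i, Nat.lt_of_succ_lt h⟩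

/-- `y` covers `x` in the order `r`: they are adjacent (consecutive) with `x` below `y`. -/
def CoveredBy {n : ℕ} (r : Letter n → Letter n → Prop) (x y : Letter n) : Prop :=
  r x y ∧ x ≠ y ∧ ∀ z, r x z → r z y → z = x ∨ z = y

/-- `x` and `y` are adjacent (consecutive) in the order `r`, in either relative order. -/
def AdjacentIn {n : ℕ} (r : Letter n → Letter n → Prop) (x y : Letter n) : Prop :=
  CoveredBy r x y ∨ CoveredBy r y x

/-- `z` lies strictly between `x` and `y` in the order `r`. -/
def Between {n : ℕ} (r : Letter n → Letter n → Prop) (x y z : Letter n) : Prop :=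
  r x z ∧ r z y ∧ z ≠ x ∧ z ≠ y

/-- The order `r` is unbarred-tight: at most one barred letter occurs between any two
consecutive unbarred letters. -/
def UnbarredTight {n : ℕ} (r : Letter n → Letter n → Prop) : Prop :=
  ∀ i : ℕ, ∀ h : i + 1 < n, ∀ b₁ b₂ : Fin n,
    Between r (false, ⟨i, Nat.lt_of_succ_lt h⟩) (false, ⟨i + 1, h⟩) (true, b₁) →
    Between r (false, ⟨i, Nat.lt_of_succ_lt h⟩) (false, ⟨i + 1, h⟩) (true, b₂) → b₁ = b₂

/-- The order `r` is barred-tight: at most one unbarred letter occurs between any two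
consecutive barred letters. -/
def BarredTight {n : ℕ} (r : Letter n → Letter n → Prop) : Prop :=
  ∀ i : ℕ, ∀ h : i + 1 < n, ∀ a₁ a₂ : Fin n,
    Between r (true, ⟨i, Nat.lt_of_succ_lt h⟩) (true, ⟨i + 1, h⟩) (false, a₁) →
    Between r (true, ⟨i, Nat.lt_of_succ_lt h⟩) (true, ⟨i + 1, h⟩) (false, a₂) → a₁ = a₂

/-- Two boxes share an edge. -/
def BoxAdj (c d : ℕ × ℕ) : Prop :=
  (c.1 = d.1 ∧ (c.2 + 1 = d.2 ∨ d.2 + 1 = c.2)) ∨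
  (c.2 = d.2 ∧ (c.1 + 1 = d.1 ∨ d.1 + 1 = c.1))

/-- `c` and `d` are joined by a chain of boxes of `S`, each sharing an edge with the next. -/
def ConnIn (S : Set (ℕ × ℕ)) (c d : ℕ × ℕ) : Prop :=
  Relation.ReflTransGen (fun u v => u ∈ S ∧ v ∈ S ∧ BoxAdj u v) c d

/-- The orders `r` and `r'` agree except that the unbarred letter `a` and the barred letter `b̄`
are adjacent in both, with `a` immediately below `b̄` in `r` and `b̄` immediately below `a`
in `r'`. -/
def OrderSwitch {n : ℕ} (r r' : Letter n → Letter n → Prop) (a b : Fin n) : Prop :=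
  CoveredBy r (false, a) (true, b) ∧ CoveredBy r' (true, b) (false, a) ∧
  ∀ x y : Letter n, ¬(x = (false, a) ∧ y = (true, b)) → ¬(x = (true, b) ∧ y = (false, a)) →
    (r x y ↔ r' x y)

/-- The fillings `T` and `T'` are related by a conversion switch at the letters `a`, `b̄`:
they agree on all boxes not containing `a` or `b̄`, the set `S` of boxes containing `a` or `b̄`
is the same in both, and in each edge-connected component of `S` they contain the same number
of `a`'s. -/
def TableauSwitch {n : ℕ} (a b : Fin n) (T T' : Filling n) : Prop :=
  (∀ c, c ∉ {c | T c = some (false, a) ∨ T c = some (true, b)} → T' c = T c) ∧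
  (∀ c, c ∈ {c | T c = some (false, a) ∨ T c = some (true, b)} ↔
    (T' c = some (false, a) ∨ T' c = some (true, b))) ∧
  (∀ c, T c = some (false, a) ∨ T c = some (true, b) →
    {d | ConnIn {e | T e = some (false, a) ∨ T e = some (true, b)} c d ∧
      T d = some (false, a)}.ncard =
    {d | ConnIn {e | T e = some (false, a) ∨ T e = some (true, b)} c d ∧
      T' d = some (false, a)}.ncard)

/-- One step of conversion between pairs (total order, colored tableau of shape `sh`):
a single conversion switch, in either direction, through valid total orders and
colored tableaux. -/
def ConvStep {n : ℕ} (sh : YoungDiagram)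
    (p q : ((Letter n → Letter n → Prop) × Filling n)) : Prop :=
  IsLinExt p.1 ∧ IsLinExt q.1 ∧ IsColoredTableau p.1 sh p.2 ∧ IsColoredTableau q.1 sh q.2 ∧
  ∃ a b : Fin n, (OrderSwitch p.1 q.1 a b ∧ TableauSwitch a b p.2 q.2) ∨
    (OrderSwitch q.1 p.1 a b ∧ TableauSwitch a b q.2 p.2)

/-- `T` (w.r.t. `p.1`) and `T'` (w.r.t. `q.1`) correspond under conversion: they are connected
by a finite sequence of conversion switches through intermediate total orders and colored
tableaux. -/
def ConvertsTo {n : ℕ} (sh : YoungDiagram)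
    (p q : ((Letter n → Letter n → Prop) × Filling n)) : Prop :=
  Relation.ReflTransGen (ConvStep sh) p q

/-- The unbarred content of a filling: `α i` is the number of unbarred letters `i` in it. -/
def unbarredContent {n : ℕ} (sh : YoungDiagram) (T : Filling n) (i : Fin n) : ℕ :=
  (sh.cells.filter fun c => T c = some (false, i)).card

/-- The total content of a filling: the number of occurrences of `i` and `ī` together. -/
def totalContent {n : ℕ} (sh : YoungDiagram) (T : Filling n) (i : Fin n) : ℕ :=
  (sh.cells.filter fun c => T c = some (false, i) ∨ T c = some (true, i)).card

/-- The total color of a filling: the number of barred letters in it. -/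
def totalColor {n : ℕ} (sh : YoungDiagram) (T : Filling n) : ℕ :=
  (sh.cells.filter fun c => (T c).map Prod.fst = some true).card

/-- The natural order `1̄ < 1 < 2̄ < 2 < ⋯ < n̄ < n` on 𝒜ₙ. -/
def natOrd (n : ℕ) : Letter n → Letter n → Prop :=
  fun x y => x.2 < y.2 ∨ (x.2 = y.2 ∧ (x.1 = true ∨ y.1 = false))

/-- The small bar order `1̄ ≺ 2̄ ≺ ⋯ ≺ n̄ ≺ 1 ≺ 2 ≺ ⋯ ≺ n` on 𝒜ₙ. -/
def smallBarOrd (n : ℕ) : Letter n → Letter n → Prop :=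
  fun x y => (x.1 = true ∧ y.1 = false) ∨ (x.1 = y.1 ∧ x.2 ≤ y.2)

/-- `f` is a semistandard skew tableau of shape `outer / inner` with entries in `{1, …, n}`:
rows weakly increase, columns strictly increase. -/
def IsSkewSSYT {n : ℕ} (outer inner : YoungDiagram) (f : ℕ × ℕ → Option (Fin n)) : Prop :=
  (∀ c, (f c).isSome ↔ (c ∈ outer ∧ c ∉ inner)) ∧
  (∀ i j₁ j₂ : ℕ, ∀ x y : Fin n, j₁ ≤ j₂ → f (i, j₁) = some x → f (i, j₂) = some y → x ≤ y) ∧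
  (∀ i₁ i₂ j : ℕ, ∀ x y : Fin n, i₁ < i₂ → f (i₁, j) = some x → f (i₂, j) = some y → x < y)

/-- The reverse row reading word of a (skew) tableau supported inside the rows of `sh`:
entries along rows right to left, rows top to bottom. -/
def revRowWord {n : ℕ} (sh : YoungDiagram) (f : ℕ × ℕ → Option (Fin n)) : List (Fin n) :=
  (List.range (sh.colLen 0)).flatMap fun i =>
    (List.range (sh.rowLen i)).reverse.filterMap fun j => f (i, j)

/-!
Since each column of a colored tableau is weakly increasing, the barred letters of a column, read
bottom to top, weakly decrease. Hence `v(T)` is `α`-ballot iff for every pair `(i, i+1)` and every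
column `j`, the number of `(i+1)̄` in columns `≤ j` plus `α_{i+1}` is at most the number of `ī` in
columns `< j` plus `α_i`: the worst prefix ends just before the `ī`'s of column `j`.

The switch only changes the column counts of `b̄`, and it changes the number of `b̄` in columns
`≤ j` only if some row of `S` has boxes of `S` in both columns `j` and `j+1`; otherwise every
component of `S` lies on one side and carries as many `a`'s in `T` as in `T'`. At such a crossing,
barred-tightness of `<` forces every `(b-1)̄` of column `j` to have a box of `S` to its right, and
barred-tightness of `≺` forces every `(b+1)̄` of column `j+1` to have a box of `S` to its left.
As a column holds at most one `a`, this bounds those counts by the `b̄`-count of the neighbouring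
column, and an induction over the columns (downward for the pair `(b-1, b)`, upward for
`(b, b+1)`) transfers the inequalities between `T` and `T'`.
-/

section

open Finset

variable {n : ℕ} {r r' ρ : Letter n → Letter n → Prop} {sh : YoungDiagram} {T T' U : Filling n}
  {a b : Fin n}

theorem List.prefix_append_iff {β : Type*} {l l₁ l₂ : List β} :
    l <+: l₁ ++ l₂ ↔ l <+: l₁ ∨ ∃ q, l = l₁ ++ q ∧ q <+: l₂ := by
  constructor
  · rintro ⟨t, ht⟩
    rcases List.append_eq_append_iff.1 ht with ⟨a', ha, -⟩ | ⟨c', hc, hd⟩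
    · exact Or.inl ⟨a', ha.symm⟩
    · exact Or.inr ⟨c', hc, t, hd.symm⟩
  · rintro (h | ⟨q, rfl, hq⟩)
    · exact List.prefix_append_of_prefix h
    · exact (List.prefix_append_right_inj l₁).2 hq

theorem List.Pairwise.not_of_mem_dropWhile {β : Type*} {R : β → β → Prop} {p : β → Bool}
    (hp : ∀ x y, R x y → p y → p x) {l : List β} (hl : l.Pairwise R) {x : β}
    (hx : x ∈ l.dropWhile p) : ¬ p x := by
  induction l with
  | nil => simp at hx
  | cons y l ih =>
    by_cases hy : p y
    · rw [List.dropWhile_cons_of_pos hy] at hx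
      exact ih hl.of_cons hx
    · rw [List.dropWhile_cons_of_neg hy] at hx
      rcases List.mem_cons.1 hx with rfl | hx
      · exact hy
      · exact fun hpx => hy (hp y x (List.rel_of_pairwise_cons hl hx) hpx)

theorem List.count_flatMap_range {β : Type*} [BEq β] (w : ℕ → List β) (x : β) (m : ℕ) :
    ((List.range m).flatMap w).count x = ∑ k ∈ Finset.range m, (w k).count x := by
  induction m with
  | zero => rfl
  | succ m ih => simp [List.range_succ, List.count_append, ih, Finset.sum_range_succ]

theorem List.flatMap_range_append_prefix {β : Type*} (w : ℕ → List β) {L j : ℕ}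
    (hL : ∀ k, L ≤ k → w k = []) {q : List β} (hq : q <+: w j) :
    (List.range j).flatMap w ++ q <+: (List.range L).flatMap w := by
  rcases lt_or_ge j L with hjL | hLj
  · have hrange : List.range (j + 1) <+: List.range L := by
      simpa [List.take_range, Nat.min_eq_left hjL] using List.take_prefix (j + 1) (List.range L)
    have := hrange.flatMap w
    rw [List.range_succ, List.flatMap_append, List.flatMap_singleton] at this
    exact ((List.prefix_append_right_inj _).2 hq).trans this
  · obtain rfl : q = [] := List.eq_nil_of_prefix_nil (hL j hLj ▸ hq)
    obtain ⟨d, rfl⟩ := Nat.exists_eq_add_of_le hLj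
    have htail : (List.map (L + ·) (List.range d)).flatMap w = [] := by
      simpa [List.flatMap_eq_nil_iff] using fun k _ => hL (L + k) (Nat.le_add_right L k)
    rw [List.range_add, List.flatMap_append, htail, List.append_nil, List.append_nil]

/-- `c x j` is the number of letters `x` in column `j`. -/
def ColumnBallot (c : Fin n → ℕ → ℕ) (α : Fin n → ℕ) : Prop :=
  ∀ i : ℕ, ∀ h : i + 1 < n, ∀ j : ℕ,
    ∑ k ∈ range (j + 1), c ⟨i + 1, h⟩ k + α ⟨i + 1, h⟩ ≤
      ∑ k ∈ range j, c ⟨i, Nat.lt_of_succ_lt h⟩ k + α ⟨i, Nat.lt_of_succ_lt h⟩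

theorem isAlphaBallot_flatMap_range_iff {α : Fin n → ℕ} {w : ℕ → List (Fin n)} {L : ℕ}
    (hw : ∀ j, (w j).Pairwise (· ≥ ·)) (hL : ∀ j, L ≤ j → w j = []) :
    IsAlphaBallot α ((List.range L).flatMap w) ↔ ColumnBallot (fun x j => (w j).count x) α := by
  constructor
  · intro h i hi j
    set q := (w j).takeWhile fun y => decide (i < y.val)
    have hup : q.count ⟨i + 1, hi⟩ = (w j).count ⟨i + 1, hi⟩ := by
      have hdrop : ((w j).dropWhile fun y => decide (i < y.val)).count ⟨i + 1, hi⟩ = 0 :=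
        List.count_eq_zero.2 fun hmem => (hw j).not_of_mem_dropWhile
          (fun x y hxy hy => by
            simp only [decide_eq_true_eq] at hy ⊢
            exact lt_of_lt_of_le hy hxy) hmem (by simp)
      conv_rhs => rw [← List.takeWhile_append_dropWhile (l := w j)
        (p := fun y : Fin n => decide (i < y.val))]
      rw [List.count_append, hdrop]
      rfl
    have hlow : q.count ⟨i, Nat.lt_of_succ_lt hi⟩ = 0 :=
      List.count_eq_zero.2 fun hmem => by simpa using List.mem_takeWhile_imp hmem
    have := h _ (List.flatMap_range_append_prefix w hL (List.takeWhile_prefix _ : q <+: w j)) i hi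
    rw [List.count_append, List.count_append, List.count_flatMap_range,
      List.count_flatMap_range, hup, hlow] at this
    rw [sum_range_succ]
    omega
  · intro h
    clear hw hL
    induction L with
    | zero =>
      intro p hp i hi
      rw [List.eq_nil_of_prefix_nil hp]
      simpa using le_trans (Nat.le_add_left _ _) (by simpa using h i hi 0)
    | succ L ih =>
      intro p hp i hi
      rw [List.range_succ, List.flatMap_append, List.flatMap_singleton] at hp
      rcases List.prefix_append_iff.1 hp with hp | ⟨q, rfl, hq⟩
      · exact ih p hp i hi
      · have hcol := hq.count_le ⟨i + 1, hi⟩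
        have := h i hi L
        dsimp only at this
        rw [sum_range_succ] at this
        rw [List.count_append, List.count_append, List.count_flatMap_range,
          List.count_flatMap_range]
        omega

theorem cumulative_ineq_transfer_downward {u u' v : ℕ → ℕ} {A B L : ℕ}
    (heq : ∀ j, L ≤ j → ∑ k ∈ range (j + 1), u k = ∑ k ∈ range (j + 1), u' k)
    (hov : ∀ j, ∑ k ∈ range (j + 1), u k ≠ ∑ k ∈ range (j + 1), u' k → v j ≤ u' (j + 1))
    (h : ∀ j, ∑ k ∈ range (j + 1), u k + A ≤ ∑ k ∈ range j, v k + B) (j : ℕ) :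
    ∑ k ∈ range (j + 1), u' k + A ≤ ∑ k ∈ range j, v k + B := by
  induction hd : L - j generalizing j with
  | zero => rw [← heq j (by omega)]; exact h j
  | succ d ih =>
    by_cases hj : ∑ k ∈ range (j + 1), u k = ∑ k ∈ range (j + 1), u' k
    · rw [← hj]; exact h j
    · have := ih (j + 1) (by omega)
      have := hov j hj
      rw [sum_range_succ _ (j + 1), sum_range_succ v j] at *
      omega

theorem cumulative_ineq_transfer_upward {u u' v : ℕ → ℕ} {A B : ℕ}
    (hov : ∀ j, ∑ k ∈ range (j + 1), u k ≠ ∑ k ∈ range (j + 1), u' k → v (j + 1) ≤ u' j)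
    (h : ∀ j, ∑ k ∈ range (j + 1), v k + A ≤ ∑ k ∈ range j, u k + B) (j : ℕ) :
    ∑ k ∈ range (j + 1), v k + A ≤ ∑ k ∈ range j, u' k + B := by
  induction j with
  | zero => simpa using h 0
  | succ j ih =>
    by_cases hj : ∑ k ∈ range (j + 1), u k = ∑ k ∈ range (j + 1), u' k
    · rw [← hj]; exact h (j + 1)
    · have := hov j hj
      rw [sum_range_succ v (j + 1), sum_range_succ u' j]
      omega

theorem ColumnBallot.of_switch {c c' : Fin n → ℕ → ℕ} {b : Fin n} {L : ℕ} {α : Fin n → ℕ}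
    (hc : ∀ x, x ≠ b → c x = c' x)
    (heq : ∀ j, L ≤ j → ∑ k ∈ range (j + 1), c b k = ∑ k ∈ range (j + 1), c' b k)
    (hpred : ∀ j, ∑ k ∈ range (j + 1), c b k ≠ ∑ k ∈ range (j + 1), c' b k →
      ∀ x : Fin n, x.val + 1 = b.val → c x j ≤ c' b (j + 1))
    (hsucc : ∀ j, ∑ k ∈ range (j + 1), c b k ≠ ∑ k ∈ range (j + 1), c' b k →
      ∀ z : Fin n, z.val = b.val + 1 → c z (j + 1) ≤ c' b j)
    (h : ColumnBallot c α) : ColumnBallot c' α := by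
  intro i hi j
  have hx : (⟨i, Nat.lt_of_succ_lt hi⟩ : Fin n) ≠ ⟨i + 1, hi⟩ := by simp
  by_cases hy : ⟨i + 1, hi⟩ = b
  · subst hy
    rw [← hc _ hx]
    exact cumulative_ineq_transfer_downward heq (fun j hj => hpred j hj _ rfl) (h i hi) j
  by_cases hb : ⟨i, Nat.lt_of_succ_lt hi⟩ = b
  · subst hb
    rw [← hc _ hx.symm]
    exact cumulative_ineq_transfer_upward (fun j hj => hsucc j hj _ rfl) (h i hi) j
  rw [← hc _ hy, ← hc _ hb]
  exact h i hi j

theorem IsLinExt.le_iff (hr : IsLinExt r) {f : Bool} {i j : Fin n} :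
    r (f, i) (f, j) ↔ i ≤ j := by
  refine ⟨fun h => not_lt.1 fun hji => ?_, hr.2 f i j⟩
  have := hr.1
  exact hji.ne (congrArg Prod.snd (antisymm (hr.2 f j i hji.le) h))

theorem IsColoredTableau.mem_of_eq_some (hT : IsColoredTableau r sh T) {c : ℕ × ℕ}
    {x : Letter n} (h : T c = some x) : c ∈ sh :=
  (hT.1 c).1 (by simp [h])

def colWord (sh : YoungDiagram) (T : Filling n) (j : ℕ) : List (Fin n) :=
  (List.range (sh.colLen j)).reverse.filterMap fun i =>
    match T (i, j) with
    | some (true, b) => some b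
    | _ => none

def colCount (sh : YoungDiagram) (T : Filling n) (x : Fin n) (j : ℕ) : ℕ :=
  #{i ∈ range (sh.colLen j) | T (i, j) = some (true, x)}

theorem vWord_eq_flatMap_colWord (sh : YoungDiagram) (T : Filling n) :
    vWord sh T = (List.range (sh.rowLen 0)).flatMap (colWord sh T) := rfl

theorem match_barred_eq_some_iff (o : Option (Letter n)) (x : Fin n) :
    (match o with | some (true, b) => some b | _ => none) = some x ↔ o = some (true, x) := by
  rcases o with _ | ⟨_ | _, v⟩ <;> simp

theorem count_colWord (sh : YoungDiagram) (T : Filling n) (x : Fin n) (j : ℕ) :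
    (colWord sh T j).count x = colCount sh T x j := by
  rw [colWord, List.count_filterMap, List.countP_reverse, List.countP_eq_length_filter]
  have : ∀ i, ((match T (i, j) with | some (true, b) => some b | _ => none) == some x) =
      decide (T (i, j) = some (true, x)) := fun i => by
    rw [Bool.eq_iff_iff, beq_iff_eq, decide_eq_true_iff, match_barred_eq_some_iff]
  simp only [this]
  rfl

theorem colWord_pairwise (hr : IsLinExt r) (hT : IsColoredTableau r sh T) (j : ℕ) :
    (colWord sh T j).Pairwise (· ≥ ·) := by
  refine List.Pairwise.filterMap (R := fun i i' : ℕ => i' < i) _ ?_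
    (List.pairwise_reverse.2 List.pairwise_lt_range)
  intro i i' hi x hx y hy
  rw [match_barred_eq_some_iff] at hx hy
  exact hr.le_iff.1 (hT.2.2.1 i' i j _ _ hi.le hy hx)

theorem colWord_eq_nil {j : ℕ} (hj : sh.rowLen 0 ≤ j) : colWord sh T j = [] := by
  have : sh.colLen j = 0 := by
    by_contra h
    have := YoungDiagram.mem_iff_lt_rowLen.1 (YoungDiagram.mem_iff_lt_colLen.2
      (Nat.pos_of_ne_zero h) : (0, j) ∈ sh)
    omega
  simp [colWord, this]

theorem isAlphaBallot_vWord_iff (hr : IsLinExt r) (hT : IsColoredTableau r sh T)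
    (α : Fin n → ℕ) : IsAlphaBallot α (vWord sh T) ↔ ColumnBallot (colCount sh T) α := by
  rw [vWord_eq_flatMap_colWord, isAlphaBallot_flatMap_range_iff (colWord_pairwise hr hT)
    fun j hj => colWord_eq_nil hj]
  simp only [count_colWord]

theorem BarredTight.eq_of_between (hbt : BarredTight r) {x y : Fin n} (hxy : x.val + 1 = y.val)
    {c d : Fin n} (hc : Between r (true, x) (true, y) (false, c))
    (hd : Between r (true, x) (true, y) (false, d)) : c = d := by
  obtain ⟨x, hx⟩ := x
  obtain ⟨y, hy⟩ := y
  subst hxy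
  exact hbt x hy c d hc hd

theorem OrderSwitch.pred_le (hr : IsLinExt r) (hsw : OrderSwitch r r' a b) {x : Fin n}
    (hx : x.val + 1 = b.val) : r (true, x) (false, a) := by
  have := hr.1
  refine (total_of r _ _).resolve_left fun hax => ?_
  have hxb : r (true, x) (true, b) := hr.2 _ _ _ (by rw [Fin.le_def]; omega)
  rcases hsw.1.2.2 _ hax hxb with h | h
  · simp at h
  · have := congrArg Fin.val (Prod.mk.inj h).2
    omega

theorem OrderSwitch.eq_of_pred_le_of_le (hr : IsLinExt r) (hbt : BarredTight r)
    (hsw : OrderSwitch r r' a b) {x : Fin n} (hx : x.val + 1 = b.val) {y : Letter n}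
    (h₁ : r (true, x) y) (h₂ : r y (true, b)) :
    y = (true, x) ∨ y = (false, a) ∨ y = (true, b) := by
  obtain ⟨_ | _, v⟩ := y
  · exact Or.inr <| Or.inl <| by
      rw [hbt.eq_of_between hx ⟨h₁, h₂, by simp, by simp⟩
        ⟨hsw.pred_le hr hx, hsw.1.1, by simp, by simp⟩]
  · have h₁ := hr.le_iff.1 h₁
    have h₂ := hr.le_iff.1 h₂
    rw [Fin.le_def] at h₁ h₂
    simp only [Prod.mk.injEq, true_and, Bool.true_eq_false, false_and, false_or, Fin.ext_iff]
    omega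

theorem OrderSwitch.eq_of_le_of_le_succ (hr : IsLinExt r) (hbt' : BarredTight r')
    (hsw : OrderSwitch r r' a b) {z : Fin n} (hz : z.val = b.val + 1) {y : Letter n}
    (h₁ : r (false, a) y) (h₂ : r y (true, z)) :
    y = (false, a) ∨ y = (true, b) ∨ y = (true, z) := by
  have := hr.1
  rcases total_of r y (true, b) with hyb | hby
  · exact (hsw.1.2.2 y h₁ hyb).imp_right Or.inl
  obtain ⟨_ | _, v⟩ := y
  · -- in `r'`, both `a` and `v` lie strictly between `b̄` and `z̄`
    by_contra hy
    have hbz : r (true, b) (true, z) := hr.2 _ _ _ (by rw [Fin.le_def]; omega)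
    have hva : v ≠ a := fun h => hy (Or.inl (by rw [h]))
    have transfer : ∀ {p q : Letter n}, r p q → q ≠ (true, b) → q ≠ (false, a) → r' p q :=
      fun h hb ha => (hsw.2.2 _ _ (fun h' => hb h'.2) (fun h' => ha h'.2)).1 h
    have hzb : ((true, z) : Letter n) ≠ (true, b) := by simp [Fin.ext_iff, hz]
    refine hva (hbt'.eq_of_between hz.symm ⟨transfer hby (by simp) (by simpa), transfer h₂
      hzb (by simp), by simp, by simp⟩ ⟨hsw.2.1.1, transfer (trans_of r hsw.1.1 hbz)
      hzb (by simp), by simp, by simp⟩)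
  · have h₁ := hr.le_iff.1 hby
    have h₂ := hr.le_iff.1 h₂
    rw [Fin.le_def] at h₁ h₂
    simp only [Prod.mk.injEq, true_and, Bool.true_eq_false, false_and, false_or, Fin.ext_iff]
    omega

def switchBoxes (T : Filling n) (a b : Fin n) : Set (ℕ × ℕ) :=
  {c | T c = some (false, a) ∨ T c = some (true, b)}

theorem IsColoredTableau.mem_of_mem_switchBoxes (hT : IsColoredTableau r sh T) {c : ℕ × ℕ}
    (hc : c ∈ switchBoxes T a b) : c ∈ sh := by
  rcases hc with h | h <;> exact hT.mem_of_eq_some h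

theorem TableauSwitch.eq_barred_iff (hts : TableauSwitch a b T T') {x : Fin n} (hx : x ≠ b)
    (c : ℕ × ℕ) : T c = some (true, x) ↔ T' c = some (true, x) := by
  by_cases hc : c ∈ switchBoxes T a b
  · have hc' := (hts.2.1 c).1 hc
    constructor <;> intro h
    · simp [switchBoxes, h, hx] at hc
    · simp [h, hx] at hc'
  · rw [hts.1 c hc]

theorem TableauSwitch.colCount_eq (hts : TableauSwitch a b T T') {x : Fin n} (hx : x ≠ b) :
    colCount sh T x = colCount sh T' x := by
  funext j
  simp only [colCount, hts.eq_barred_iff hx]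

theorem connIn_equivalence (S : Set (ℕ × ℕ)) : Equivalence (ConnIn S) where
  refl _ := Relation.ReflTransGen.refl
  symm := by
    have : Std.Symm fun u v : ℕ × ℕ => u ∈ S ∧ v ∈ S ∧ BoxAdj u v :=
      ⟨fun _ _ ⟨hu, hv, h⟩ => ⟨hv, hu, by unfold BoxAdj at h ⊢; omega⟩⟩
    intro x y h
    exact Relation.ReflTransGen.stdSymm.symm x y h
  trans := Relation.ReflTransGen.trans

theorem card_filter_eq_of_component_ncard_eq {S : Set (ℕ × ℕ)} {P Q : ℕ × ℕ → Prop}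
    [DecidablePred P] [DecidablePred Q]
    (hPQ : ∀ c ∈ S, {d | ConnIn S c d ∧ P d}.ncard = {d | ConnIn S c d ∧ Q d}.ncard)
    {X : Finset (ℕ × ℕ)} (hXS : ∀ c ∈ X, c ∈ S) (hX : ∀ c ∈ X, ∀ d, ConnIn S c d → d ∈ X) :
    #{c ∈ X | P c} = #{c ∈ X | Q c} := by
  have hE := connIn_equivalence S
  let comp : ℕ × ℕ → Set (ℕ × ℕ) := fun c => {d | ConnIn S c d}
  have hcomp : ∀ c d, comp d = comp c ↔ ConnIn S c d := fun c d =>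
    ⟨fun h => (h ▸ (hE.refl d : d ∈ comp d) : d ∈ comp c),
      fun h => Set.ext fun e => ⟨hE.trans h, hE.trans (hE.symm h)⟩⟩
  have hfib : ∀ (R : ℕ × ℕ → Prop) [DecidablePred R], ∀ c ∈ X,
      #{d ∈ {d ∈ X | R d} | comp d = comp c} = {d | ConnIn S c d ∧ R d}.ncard := by
    intro R _ c hc
    rw [← Set.ncard_coe_finset]
    congr 1
    ext d
    simp only [coe_filter, mem_filter, Set.mem_ofPred_eq, hcomp]
    exact ⟨fun ⟨⟨_, hR⟩, hcd⟩ => ⟨hcd, hR⟩, fun ⟨hcd, hR⟩ => ⟨⟨hX c hc d hcd, hR⟩, hcd⟩⟩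
  have hmaps : ∀ (R : ℕ × ℕ → Prop) [DecidablePred R],
      Set.MapsTo comp ↑(X.filter R) ↑(X.image comp) :=
    fun R _ d hd => mem_image_of_mem comp (mem_filter.1 hd).1
  rw [card_eq_sum_card_fiberwise (hmaps P), card_eq_sum_card_fiberwise (hmaps Q)]
  refine sum_congr rfl fun q hq => ?_
  obtain ⟨c, hc, rfl⟩ := mem_image.1 hq
  rw [hfib P c hc, hfib Q c hc, hPQ c (hXS c hc)]

theorem sum_card_filter_range_colLen (sh : YoungDiagram) (P : ℕ × ℕ → Prop) [DecidablePred P]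
    (m : ℕ) :
    ∑ k ∈ range m, #{i ∈ range (sh.colLen k) | P (i, k)} = #{c ∈ sh.cells | c.2 < m ∧ P c} := by
  rw [card_eq_sum_card_fiberwise (f := Prod.snd) (t := range m)
    fun c hc => mem_range.2 (mem_filter.1 hc).2.1]
  refine sum_congr rfl fun k hk => ?_
  refine card_nbij' (fun i => (i, k)) Prod.fst ?_ ?_ (fun _ _ => rfl) ?_
  · intro i hi
    simp only [mem_coe, mem_filter, mem_range, YoungDiagram.mem_cells] at hi ⊢
    exact ⟨⟨YoungDiagram.mem_iff_lt_colLen.2 hi.1, mem_range.1 hk, hi.2⟩, trivial⟩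
  · rintro ⟨i, k'⟩ hi
    simp only [mem_coe, mem_filter, mem_range, YoungDiagram.mem_cells] at hi ⊢
    obtain ⟨⟨hsh, -, hP⟩, rfl⟩ := hi
    exact ⟨YoungDiagram.mem_iff_lt_colLen.1 hsh, hP⟩
  · rintro ⟨i, k'⟩ hi
    simp only [mem_coe, mem_filter] at hi
    rw [← hi.2]

theorem sum_colCount_eq_of_no_overlap (hT : IsColoredTableau r sh T)
    (hts : TableauSwitch a b T T') {j : ℕ}
    (hno : ∀ w, (w, j) ∈ switchBoxes T a b → (w, j + 1) ∉ switchBoxes T a b) :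
    ∑ k ∈ range (j + 1), colCount sh T b k = ∑ k ∈ range (j + 1), colCount sh T' b k := by
  set S := switchBoxes T a b
  set X := {c ∈ sh.cells | c ∈ S ∧ c.2 ≤ j}
  have hXS : ∀ c ∈ X, c ∈ S := fun c hc => (mem_filter.1 hc).2.1
  -- no edge of `S` crosses between columns `j` and `j + 1`
  have hX : ∀ c ∈ X, ∀ d, ConnIn S c d → d ∈ X := by
    intro c hc d hcd
    induction hcd with
    | refl => exact hc
    | @tail u v _ hstep ih =>
      obtain ⟨hu, hv, hadj⟩ := hstep
      have hu' := (mem_filter.1 ih).2.2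
      refine mem_filter.2 ⟨(YoungDiagram.mem_cells _).2 (hT.mem_of_mem_switchBoxes hv), hv, ?_⟩
      rcases hadj with ⟨hrow, hcol | hcol⟩ | ⟨hcol, -⟩
      · by_contra hlt
        have hu2 : u.2 = j := by omega
        have hv2 : v.2 = j + 1 := by omega
        exact hno _ (by rwa [← hu2]) (by rw [hrow, ← hv2]; exact hv)
      all_goals omega
  have ha := card_filter_eq_of_component_ncard_eq hts.2.2 hXS hX
  have hsplit : ∀ U : Filling n, (∀ c, c ∈ S ↔ U c = some (false, a) ∨ U c = some (true, b)) →
      #{c ∈ X | U c = some (false, a)} + #{c ∈ X | U c = some (true, b)} = #X ∧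
      ∑ k ∈ range (j + 1), colCount sh U b k = #{c ∈ X | U c = some (true, b)} := by
    intro U hU
    constructor
    · have hb : {c ∈ X | U c = some (true, b)} = {c ∈ X | ¬U c = some (false, a)} :=
        filter_congr fun c hc => by rcases (hU c).1 (hXS c hc) with h | h <;> simp [h]
      rw [hb]
      exact card_filter_add_card_filter_not _
    · refine (sum_card_filter_range_colLen sh (fun c => U c = some (true, b)) (j + 1)).trans ?_
      congr 1
      ext c
      simp only [X, mem_filter]
      exact ⟨fun ⟨hc, hj, hb⟩ => ⟨⟨hc, (hU c).2 (Or.inr hb), by omega⟩, hb⟩,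
        fun ⟨⟨hc, _, hj⟩, hb⟩ => ⟨hc, by omega, hb⟩⟩
  obtain ⟨h₁, h₂⟩ := hsplit T fun _ => Iff.rfl
  obtain ⟨h₁', h₂'⟩ := hsplit T' hts.2.1
  omega

theorem card_switchBoxes_col_le (hU : IsColoredTableau ρ sh U)
    (hUS : ∀ c, c ∈ switchBoxes T a b ↔ U c = some (false, a) ∨ U c = some (true, b)) (k : ℕ) :
    #{i ∈ range (sh.colLen k) | (i, k) ∈ switchBoxes T a b} ≤ colCount sh U b k + 1 := by
  have hA : #{i ∈ range (sh.colLen k) | U (i, k) = some (false, a)} ≤ 1 :=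
    card_le_one.2 fun i hi i' hi' => by
      by_contra hne
      exact hU.2.2.2.1 i i' k a hne (mem_filter.1 hi).2 (mem_filter.1 hi').2
  calc #{i ∈ range (sh.colLen k) | (i, k) ∈ switchBoxes T a b}
      = #({i ∈ range (sh.colLen k) | U (i, k) = some (false, a)} ∪
          {i ∈ range (sh.colLen k) | U (i, k) = some (true, b)}) := by
        rw [← filter_or]
        simp only [hUS]
    _ ≤ colCount sh U b k + 1 := by
        rw [colCount, add_comm]
        exact (card_union_le _ _).trans (Nat.add_le_add_right hA _)

theorem colCount_le_of_forall_mem_switchBoxes (hT : IsColoredTableau r sh T)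
    (hU : IsColoredTableau ρ sh U)
    (hUS : ∀ c, c ∈ switchBoxes T a b ↔ U c = some (false, a) ∨ U c = some (true, b))
    {x : Fin n} {j k w : ℕ} (hw : (w, k) ∈ switchBoxes T a b)
    (hx : ∀ i, T (i, j) = some (true, x) → i ≠ w ∧ (i, k) ∈ switchBoxes T a b) :
    colCount sh T x j ≤ colCount sh U b k := by
  have hS : ∀ i, (i, k) ∈ switchBoxes T a b → i ∈ range (sh.colLen k) := fun i hi =>
    mem_range.2 <| YoungDiagram.mem_iff_lt_colLen.1 (hT.mem_of_mem_switchBoxes hi)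
  have hlt : colCount sh T x j < #{i ∈ range (sh.colLen k) | (i, k) ∈ switchBoxes T a b} := by
    refine card_lt_card ((ssubset_iff_of_subset fun i hi => ?_).2 ⟨w, ?_, fun hwx => ?_⟩)
    · have := hx i (mem_filter.1 hi).2
      exact mem_filter.2 ⟨hS i this.2, this.2⟩
    · exact mem_filter.2 ⟨hS w hw, hw⟩
    · exact (hx w (mem_filter.1 hwx).2).1 rfl
  have := card_switchBoxes_col_le hU hUS k
  omega

theorem lt_and_mem_switchBoxes_of_pred (hr : IsLinExt r) (hbt : BarredTight r)
    (hsw : OrderSwitch r r' a b) (hT : IsColoredTableau r sh T) {x : Fin n}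
    (hx : x.val + 1 = b.val) {w j i : ℕ} (hw : (w, j) ∈ switchBoxes T a b)
    (hw' : (w, j + 1) ∈ switchBoxes T a b) (hi : T (i, j) = some (true, x)) :
    i < w ∧ (i, j + 1) ∈ switchBoxes T a b := by
  have := hr.1
  have hwi : i < w := by
    by_contra! hwi
    have hcol : ∀ y, T (w, j) = some y → r y (true, x) := fun y h => hT.2.2.1 w i j _ _ hwi h hi
    rcases hw with h | h
    · exact absurd (antisymm (hcol _ h) (hsw.pred_le hr hx)) (by simp)
    · have := Fin.le_def.1 (hr.le_iff.1 (hcol _ h))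
      omega
  refine ⟨hwi, ?_⟩
  obtain ⟨y, hy⟩ := Option.isSome_iff_exists.1 <| (hT.1 _).2 <|
    sh.up_left_mem hwi.le le_rfl (hT.mem_of_mem_switchBoxes hw')
  have hyb : r y (true, b) := by
    rcases hw' with h | h
    · exact trans_of r (hT.2.2.1 i w _ _ _ hwi.le hy h) hsw.1.1
    · exact hT.2.2.1 i w _ _ _ hwi.le hy h
  rcases hsw.eq_of_pred_le_of_le hr hbt hx (hT.2.1 i j (j + 1) _ _ (by omega) hi hy) hyb
    with rfl | rfl | rfl
  · exact absurd hy (hT.2.2.2.2 i j (j + 1) x (by omega) hi)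
  · exact Or.inl hy
  · exact Or.inr hy

theorem lt_and_mem_switchBoxes_of_succ (hr : IsLinExt r) (hbt' : BarredTight r')
    (hsw : OrderSwitch r r' a b) (hT : IsColoredTableau r sh T) {z : Fin n}
    (hz : z.val = b.val + 1) {w j i : ℕ} (hw : (w, j) ∈ switchBoxes T a b)
    (hw' : (w, j + 1) ∈ switchBoxes T a b) (hi : T (i, j + 1) = some (true, z)) :
    w < i ∧ (i, j) ∈ switchBoxes T a b := by
  have := hr.1
  have hwi : w < i := by
    by_contra! hwi
    have hzb : r (true, z) (true, b) := by
      rcases hw' with h | h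
      · exact trans_of r (hT.2.2.1 i w _ _ _ hwi hi h) hsw.1.1
      · exact hT.2.2.1 i w _ _ _ hwi hi h
    have := Fin.le_def.1 (hr.le_iff.1 hzb)
    omega
  refine ⟨hwi, ?_⟩
  obtain ⟨y, hy⟩ := Option.isSome_iff_exists.1 <| (hT.1 _).2 <|
    sh.up_left_mem le_rfl (Nat.le_succ j) (hT.mem_of_eq_some hi)
  have hay : r (false, a) y := by
    rcases hw with h | h
    · exact hT.2.2.1 w i _ _ _ hwi.le h hy
    · exact trans_of r hsw.1.1 (hT.2.2.1 w i _ _ _ hwi.le h hy)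
  rcases hsw.eq_of_le_of_le_succ hr hbt' hz hay (hT.2.1 i j (j + 1) _ _ (by omega) hy hi)
    with rfl | rfl | rfl
  · exact Or.inl hy
  · exact Or.inr hy
  · exact absurd hy (hT.2.2.2.2 i (j + 1) j z (by omega) hi)

theorem exists_overlap_of_sum_colCount_ne (hT : IsColoredTableau r sh T)
    (hts : TableauSwitch a b T T') {j : ℕ}
    (h : ∑ k ∈ range (j + 1), colCount sh T b k ≠ ∑ k ∈ range (j + 1), colCount sh T' b k) :
    ∃ w, (w, j) ∈ switchBoxes T a b ∧ (w, j + 1) ∈ switchBoxes T a b := by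
  by_contra! hno
  exact h (sum_colCount_eq_of_no_overlap hT hts hno)

theorem sum_colCount_eq_of_rowLen_le (hT : IsColoredTableau r sh T)
    (hts : TableauSwitch a b T T') {j : ℕ} (hj : sh.rowLen 0 ≤ j) :
    ∑ k ∈ range (j + 1), colCount sh T b k = ∑ k ∈ range (j + 1), colCount sh T' b k := by
  refine sum_colCount_eq_of_no_overlap hT hts fun w _ hw => ?_
  have hsh := YoungDiagram.mem_iff_lt_rowLen.1 (hT.mem_of_mem_switchBoxes hw)
  have := sh.rowLen_anti 0 w (Nat.zero_le w)
  omega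

theorem colCount_pred_le_of_sum_ne (hr : IsLinExt r) (hbt : BarredTight r)
    (hsw : OrderSwitch r r' a b) (hT : IsColoredTableau r sh T) (hts : TableauSwitch a b T T')
    (hU : IsColoredTableau ρ sh U)
    (hUS : ∀ c, c ∈ switchBoxes T a b ↔ U c = some (false, a) ∨ U c = some (true, b)) {j : ℕ}
    (hj : ∑ k ∈ range (j + 1), colCount sh T b k ≠ ∑ k ∈ range (j + 1), colCount sh T' b k)
    {x : Fin n} (hx : x.val + 1 = b.val) : colCount sh T x j ≤ colCount sh U b (j + 1) := by
  obtain ⟨w, hw, hw'⟩ := exists_overlap_of_sum_colCount_ne hT hts hj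
  exact colCount_le_of_forall_mem_switchBoxes hT hU hUS hw' fun i hi =>
    (lt_and_mem_switchBoxes_of_pred hr hbt hsw hT hx hw hw' hi).imp_left Nat.ne_of_lt

theorem colCount_succ_le_of_sum_ne (hr : IsLinExt r) (hbt' : BarredTight r')
    (hsw : OrderSwitch r r' a b) (hT : IsColoredTableau r sh T) (hts : TableauSwitch a b T T')
    (hU : IsColoredTableau ρ sh U)
    (hUS : ∀ c, c ∈ switchBoxes T a b ↔ U c = some (false, a) ∨ U c = some (true, b)) {j : ℕ}
    (hj : ∑ k ∈ range (j + 1), colCount sh T b k ≠ ∑ k ∈ range (j + 1), colCount sh T' b k)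
    {z : Fin n} (hz : z.val = b.val + 1) : colCount sh T z (j + 1) ≤ colCount sh U b j := by
  obtain ⟨w, hw, hw'⟩ := exists_overlap_of_sum_colCount_ne hT hts hj
  exact colCount_le_of_forall_mem_switchBoxes hT hU hUS hw fun i hi =>
    (lt_and_mem_switchBoxes_of_succ hr hbt' hsw hT hz hw hw' hi).imp_left Nat.ne_of_gt

end

theorem vWord_alphaBallot_iff_of_single_switch_general {n : ℕ} (r r' : Letter n → Letter n → Prop)
    (hr : IsLinExt r) (hr' : IsLinExt r')
    (hbt : BarredTight r) (hbt' : BarredTight r')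
    (sh : YoungDiagram) (T T' : Filling n)
    (hT : IsColoredTableau r sh T) (hT' : IsColoredTableau r' sh T')
    (a b : Fin n) (hsw : OrderSwitch r r' a b) (hts : TableauSwitch a b T T')
    (α : Fin n → ℕ) :
    IsAlphaBallot α (vWord sh T) ↔ IsAlphaBallot α (vWord sh T') := by
  rw [isAlphaBallot_vWord_iff hr hT, isAlphaBallot_vWord_iff hr' hT']
  have hL : ∀ j, sh.rowLen 0 ≤ j → _ := fun j hj => sum_colCount_eq_of_rowLen_le hT hts hj
  constructor
  · exact ColumnBallot.of_switch (fun x hx => hts.colCount_eq hx) hL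
      (fun j hj x hx => colCount_pred_le_of_sum_ne hr hbt hsw hT hts hT' hts.2.1 hj hx)
      (fun j hj z hz => colCount_succ_le_of_sum_ne hr hbt' hsw hT hts hT' hts.2.1 hj hz)
  · refine ColumnBallot.of_switch (fun x hx => (hts.colCount_eq hx).symm)
      (fun j hj => (hL j hj).symm) (fun j hj x hx => ?_) (fun j hj z hz => ?_)
    · rw [← hts.colCount_eq (Fin.ne_of_val_ne (by omega))]
      exact colCount_pred_le_of_sum_ne hr hbt hsw hT hts hT (fun _ => Iff.rfl) (Ne.symm hj) hx
    · rw [← hts.colCount_eq (Fin.ne_of_val_ne (by omega))]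
      exact colCount_succ_le_of_sum_ne hr hbt' hsw hT hts hT (fun _ => Iff.rfl) (Ne.symm hj) hz

/-- If `<` and `≺` are barred-tight total orders, `T`, `T'` are colored
tableaux related by a single conversion switch, and `α` is their common unbarred content,
then `v(T)` is an `α`-ballot sequence iff `v(T')` is. -/
theorem vWord_alphaBallot_iff_of_single_switch {n : ℕ} (r r' : Letter n → Letter n → Prop)
    (hr : IsLinExt r) (hr' : IsLinExt r')
    (hbt : BarredTight r) (hbt' : BarredTight r')
    (sh : YoungDiagram) (T T' : Filling n)
    (hT : IsColoredTableau r sh T) (hT' : IsColoredTableau r' sh T')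
    (a b : Fin n) (hsw : OrderSwitch r r' a b) (hts : TableauSwitch a b T T')
    (α : Fin n → ℕ) (hα : unbarredContent sh T = α) (hα' : unbarredContent sh T' = α) :
    IsAlphaBallot α (vWord sh T) ↔ IsAlphaBallot α (vWord sh T') :=
  vWord_alphaBallot_iff_of_single_switch_general r r' hr hr' hbt hbt' sh T T' hT hT' a b hsw hts α
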